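/- Let A, B be Hermitian positive definite, and let Z_k be the Newton iteration for the unitary polar factor: Z_0 = R_B R_A^{-1}, Z_{k+1} = (Z_k + Z_k^{-*})/2, where A = R_A* R_A and B = R_B* R_B are Cholesky factorizations. Let A_k be the uncoupled averaging iteration A_0 = B, A_{k+1} = (A_k + A A_k^{-1} B)/2. Then Z_k = R_B^{-*} A_k R_A^{-1} for all k ≥ 0. -/

import Mathlib

open Matrix ComplexOrder

namespace Matrix.PosSemidef

/-- The square root of a positive semidefinite matrix (the definition of the older Mathlib). -/
noncomputable def sqrt {n : Type*} [Fintype n] [DecidableEq n] {𝕜 : Type*} [RCLike 𝕜]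
    {A : Matrix n n 𝕜} (hA : A.PosSemidef) : Matrix n n 𝕜 :=
  hA.1.eigenvectorUnitary.1 * diagonal ((↑) ∘ (√·) ∘ hA.1.eigenvalues) *
    (star hA.1.eigenvectorUnitary : Matrix n n 𝕜)

lemma posSemidef_sqrt {n : Type*} [Fintype n] [DecidableEq n] {𝕜 : Type*} [RCLike 𝕜]
    {A : Matrix n n 𝕜} (hA : A.PosSemidef) : hA.sqrt.PosSemidef := by
  unfold sqrt
  have h : (diagonal ((↑) ∘ (√·) ∘ hA.1.eigenvalues : n → 𝕜)).PosSemidef := by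
    refine posSemidef_diagonal_iff.mpr fun i => ?_
    simp only [Function.comp_apply]
    exact_mod_cast Real.sqrt_nonneg _
  have := h.mul_mul_conjTranspose_same (hA.1.eigenvectorUnitary : Matrix n n 𝕜)
  simpa [star_eq_conjTranspose] using this

end Matrix.PosSemidef

lemma geomMean_aux {n : ℕ} {A B : Matrix (Fin n) (Fin n) ℂ} (hA : A.PosDef) (hB : B.PosDef) :
    ((hA.posSemidef.sqrt)⁻¹ * B * (hA.posSemidef.sqrt)⁻¹).PosSemidef := by
  have h := hB.posSemidef.conjTranspose_mul_mul_same (hA.posSemidef.sqrt)⁻¹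
  rwa [(hA.posSemidef.posSemidef_sqrt.isHermitian.inv).eq] at h

/-- The geometric mean `A # B = A^{1/2} (A^{-1/2} B A^{-1/2})^{1/2} A^{1/2}` of two
Hermitian positive definite matrices. -/
noncomputable def geomMean {n : ℕ} {A B : Matrix (Fin n) (Fin n) ℂ}
    (hA : A.PosDef) (hB : B.PosDef) : Matrix (Fin n) (Fin n) ℂ :=
  hA.posSemidef.sqrt * (geomMean_aux hA hB).sqrt * hA.posSemidef.sqrt

/-!
Put `D = R_A R_B⁻¹ = Z₀⁻¹`. The two conditions "`D Z` is Hermitian" and "`Z D` is Hermitian"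
are swapped by `Z ↦ Z⁻ᴴ`, so both hold along the Newton iteration; and for such `Z` one has
`Z⁻ᴴ = Dᴴ Z⁻¹ D⁻¹`. Writing `A_k = R_Bᴴ Z_k R_A`, the congruence `X ↦ R_B⁻ᴴ X R_A⁻¹` sends
`A A_k⁻¹ B` to exactly `Dᴴ Z_k⁻¹ D⁻¹`, hence the averaging step to the Newton step.
-/

namespace Matrix

variable {n : Type*} [Fintype n] [DecidableEq n] {K : Type*} [Field K] [StarRing K]

lemma isHermitian_conjTranspose_inv_mul {D Z : Matrix n n K} (h : (D * Z).IsHermitian) :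
    ((Zᴴ)⁻¹ * D).IsHermitian := by
  by_cases hZ : IsUnit Z.det
  · have : (Zᴴ)⁻¹ * D = (Z⁻¹)ᴴ * (D * Z) * Z⁻¹ := by
      rw [conjTranspose_nonsing_inv, Matrix.mul_assoc _ (D * Z),
        mul_nonsing_inv_cancel_right _ _ hZ]
    rw [this]
    exact isHermitian_conjTranspose_mul_mul _ h
  · rw [nonsing_inv_apply_not_isUnit _ (by rwa [det_conjTranspose, isUnit_star]), zero_mul]
    exact isHermitian_zero

lemma isHermitian_mul_conjTranspose_inv {D Z : Matrix n n K} (h : (Z * D).IsHermitian) :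
    (D * (Zᴴ)⁻¹).IsHermitian := by
  by_cases hZ : IsUnit Z.det
  · have : D * (Zᴴ)⁻¹ = Z⁻¹ * (Z * D) * (Z⁻¹)ᴴ := by
      rw [conjTranspose_nonsing_inv, nonsing_inv_mul_cancel_left _ _ hZ]
    rw [this]
    exact isHermitian_mul_mul_conjTranspose _ h
  · rw [nonsing_inv_apply_not_isUnit _ (by rwa [det_conjTranspose, isUnit_star]), mul_zero]
    exact isHermitian_zero

lemma conjTranspose_inv_eq_of_isHermitian_mul {D Z : Matrix n n K} (h : (D * Z).IsHermitian)
    (hD : IsUnit D.det) : (Zᴴ)⁻¹ = Dᴴ * Z⁻¹ * D⁻¹ := by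
  have := (isHermitian_conjTranspose_inv_mul h).eq
  rw [conjTranspose_mul, conjTranspose_nonsing_inv, conjTranspose_conjTranspose] at this
  rw [this, mul_nonsing_inv_cancel_right _ _ hD]

noncomputable def polarNewtonStep (Z : Matrix n n K) : Matrix n n K :=
  (2 : K)⁻¹ • (Z + (Zᴴ)⁻¹)

noncomputable def averagingStep (A B X : Matrix n n K) : Matrix n n K :=
  (2 : K)⁻¹ • (X + A * X⁻¹ * B)

lemma isHermitian_mul_polarNewtonStep {D Z : Matrix n n K}
    (hDZ : (D * Z).IsHermitian) (hZD : (Z * D).IsHermitian) :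
    (D * polarNewtonStep Z).IsHermitian := by
  rw [polarNewtonStep, Matrix.mul_smul, Matrix.mul_add]
  exact (hDZ.add (isHermitian_mul_conjTranspose_inv hZD)).smul (IsSelfAdjoint.ofNat 2).inv₀

lemma isHermitian_polarNewtonStep_mul {D Z : Matrix n n K}
    (hDZ : (D * Z).IsHermitian) (hZD : (Z * D).IsHermitian) :
    (polarNewtonStep Z * D).IsHermitian := by
  rw [polarNewtonStep, Matrix.smul_mul, Matrix.add_mul]
  exact (hZD.add (isHermitian_conjTranspose_inv_mul hDZ)).smul (IsSelfAdjoint.ofNat 2).inv₀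

lemma polarNewtonStep_congr_eq {RA RB X : Matrix n n K} (hRA : IsUnit RA.det)
    (hRB : IsUnit RB.det) (hX : (RA * RB⁻¹ * ((RBᴴ)⁻¹ * X * RA⁻¹)).IsHermitian) :
    polarNewtonStep ((RBᴴ)⁻¹ * X * RA⁻¹) =
      (RBᴴ)⁻¹ * averagingStep (RAᴴ * RA) (RBᴴ * RB) X * RA⁻¹ := by
  have hRBH : IsUnit RBᴴ.det := by rwa [det_conjTranspose, isUnit_star]
  have hD : IsUnit (RA * RB⁻¹).det := by
    rw [det_mul]; exact hRA.mul (isUnit_nonsing_inv_det _ hRB)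
  have hY : ((RBᴴ)⁻¹ * X * RA⁻¹)⁻¹ = RA * X⁻¹ * RBᴴ := by
    rw [Matrix.mul_inv_rev, Matrix.mul_inv_rev, nonsing_inv_nonsing_inv _ hRA,
      nonsing_inv_nonsing_inv _ hRBH, Matrix.mul_assoc]
  have hDinv : (RA * RB⁻¹)⁻¹ = RB * RA⁻¹ := by
    rw [Matrix.mul_inv_rev, nonsing_inv_nonsing_inv _ hRB]
  rw [polarNewtonStep, averagingStep, Matrix.mul_smul, Matrix.smul_mul, Matrix.mul_add,
    Matrix.add_mul, conjTranspose_inv_eq_of_isHermitian_mul hX hD, hY, hDinv]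
  simp only [conjTranspose_mul, conjTranspose_nonsing_inv, Matrix.mul_assoc]

end Matrix

theorem polar_newton_eq_averaging_general {n : ℕ} {A B RA RB : Matrix (Fin n) (Fin n) ℂ}
    (hRA : IsUnit RA.det) (hRB : IsUnit RB.det)
    (hAfac : A = RAᴴ * RA) (hBfac : B = RBᴴ * RB)
    (Z As : ℕ → Matrix (Fin n) (Fin n) ℂ)
    (hZ0 : Z 0 = RB * RA⁻¹)
    (hZrec : ∀ k, Z (k + 1) = (2 : ℂ)⁻¹ • (Z k + ((Z k)ᴴ)⁻¹))
    (hA0 : As 0 = B)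
    (hArec : ∀ k, As (k + 1) = (2 : ℂ)⁻¹ • (As k + A * (As k)⁻¹ * B)) :
    ∀ k, Z k = (RBᴴ)⁻¹ * As k * RA⁻¹ := by
  set D := RA * RB⁻¹
  suffices H : ∀ k, Z k = (RBᴴ)⁻¹ * As k * RA⁻¹ ∧ (D * Z k).IsHermitian ∧
      (Z k * D).IsHermitian from fun k => (H k).1
  intro k
  induction k with
  | zero =>
    have hRBH : IsUnit RBᴴ.det := by rwa [det_conjTranspose, isUnit_star]
    have hDZ : D * Z 0 = 1 := by
      rw [hZ0, Matrix.mul_assoc, nonsing_inv_mul_cancel_left _ _ hRB, mul_nonsing_inv _ hRA]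
    have hZD : Z 0 * D = 1 := by
      rw [hZ0, Matrix.mul_assoc, nonsing_inv_mul_cancel_left _ _ hRA, mul_nonsing_inv _ hRB]
    refine ⟨?_, hDZ ▸ isHermitian_one, hZD ▸ isHermitian_one⟩
    rw [hZ0, hA0, hBfac, ← Matrix.mul_assoc, nonsing_inv_mul _ hRBH, Matrix.one_mul]
  | succ k ih =>
    obtain ⟨hZk, hDZ, hZD⟩ := ih
    have hstep : Z (k + 1) = polarNewtonStep (Z k) := hZrec k
    refine ⟨?_, hstep ▸ isHermitian_mul_polarNewtonStep hDZ hZD,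
      hstep ▸ isHermitian_polarNewtonStep_mul hDZ hZD⟩
    rw [hstep, hArec k, hAfac, hBfac, hZk]
    exact polarNewtonStep_congr_eq hRA hRB (hZk ▸ hDZ)

/-- With Cholesky factorizations `A = R_Aᴴ R_A`, `B = R_Bᴴ R_B`, the Newton iteration for the
unitary polar factor of `R_B R_A⁻¹` and the uncoupled averaging iteration `A_0 = B`,
`A_{k+1} = (A_k + A A_k⁻¹ B)/2` are related by `Z_k = R_B^{-ᴴ} A_k R_A⁻¹`. -/
theorem polar_newton_eq_averaging {n : ℕ} {A B RA RB : Matrix (Fin n) (Fin n) ℂ}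
    (hA : A.PosDef) (hB : B.PosDef)
    (hRA : IsUnit RA.det) (hRB : IsUnit RB.det)
    (hRAtri : RA.BlockTriangular (id : Fin n → Fin n))
    (hRBtri : RB.BlockTriangular (id : Fin n → Fin n))
    (hRAdiag : ∀ i, 0 < (RA i i).re ∧ (RA i i).im = 0)
    (hRBdiag : ∀ i, 0 < (RB i i).re ∧ (RB i i).im = 0)
    (hAfac : A = RAᴴ * RA) (hBfac : B = RBᴴ * RB)
    (Z As : ℕ → Matrix (Fin n) (Fin n) ℂ)
    (hZ0 : Z 0 = RB * RA⁻¹)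
    (hZrec : ∀ k, Z (k + 1) = (2 : ℂ)⁻¹ • (Z k + ((Z k)ᴴ)⁻¹))
    (hA0 : As 0 = B)
    (hArec : ∀ k, As (k + 1) = (2 : ℂ)⁻¹ • (As k + A * (As k)⁻¹ * B)) :
    ∀ k, Z k = (RBᴴ)⁻¹ * As k * RA⁻¹ :=
  polar_newton_eq_averaging_general hRA hRB hAfac hBfac Z As hZ0 hZrec hA0 hArec
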